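/- For every natural number k ≥ 1, every 0 < α < 1, and all x, y > 0, the converse neo-classical inequality holds: ∑_{j=0}^k C(αk, αj) x^{αj} y^{α(k-j)} > (x+y)^{αk}, where C(a,b) = Γ(a+1)/(Γ(b+1)Γ(a-b+1)) is the generalized binomial coefficient. -/

import Mathlib

noncomputable def genBinom (a b : ℝ) : ℝ :=
  Real.Gamma (a + 1) / (Real.Gamma (b + 1) * Real.Gamma (a - b + 1))

/-! The sums `P n x = ∑ⱼ C(αn, αj) x^{αj} y^{α(n-j)}` satisfy
`P (n+1) x = y^{α(n+1)} + Γ(α(n+1)+1)/Γ(αn+1) · I^α[P n] x`, where `I^α` is the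
Riemann–Liouville integral, because `I^α` sends `u^c` to `Γ(c+1)/Γ(c+α+1) · x^{c+α}`.
Applied to `(u + y)^β`, the substitution `u + y = (x + y) r` turns `I^α` into an incomplete Beta
integral `∫_t^1 (1-r)^{α-1} r^β`, `t = y/(x+y)`; since `α < 1`, the missing piece satisfies
`∫_0^t ≤ t^{β+1} B(β+1, α) < t^{β+α} B(β+1, α)`, which is exactly
`(x+y)^{β+α} < y^{β+α} + Γ(β+α+1)/Γ(β+1) · I^α[(· + y)^β] x`.
As `I^α` is monotone, induction on `n` gives `P n x ≥ (x+y)^{αn}`, strictly for `n ≥ 1`. -/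

open MeasureTheory Set intervalIntegral ProbabilityTheory

theorem intervalIntegrable_sub_rpow_mul {α x a b : ℝ} {f : ℝ → ℝ} (hα : 0 < α)
    (hf : Continuous f) :
    IntervalIntegrable (fun u => (x - u) ^ (α - 1) * f u) volume a b := by
  have hk := (intervalIntegrable_rpow' (a := x - a) (b := x - b)
    (show -1 < α - 1 by linarith)).comp_sub_left x
  simp only [sub_sub_cancel] at hk
  exact hk.mul_continuousOn hf.continuousOn

theorem integral_one_sub_rpow_mul_rpow {a b : ℝ} (ha : 0 < a) (hb : 0 < b) :
    ∫ r in (0 : ℝ)..1, (1 - r) ^ (b - 1) * r ^ (a - 1) = beta a b := by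
  have hc : ((∫ r in (0 : ℝ)..1, (1 - r) ^ (b - 1) * r ^ (a - 1) : ℝ) : ℂ)
      = Complex.betaIntegral a b := by
    rw [Complex.betaIntegral, ← integral_ofReal]
    refine integral_congr fun r hr => ?_
    rw [uIcc_of_le zero_le_one] at hr
    rw [Complex.ofReal_mul, Complex.ofReal_cpow hr.1, Complex.ofReal_cpow (by linarith [hr.2])]
    push_cast
    ring
  rw [beta_eq_betaIntegralReal a b ha hb, ← hc, Complex.ofReal_re]

theorem integral_sub_rpow_mul_rpow_mul_left {α β s a b : ℝ} (hs : 0 < s) (ha : 0 ≤ a)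
    (hab : a ≤ b) (hb : b ≤ 1) :
    ∫ u in s * a..s * b, (s - u) ^ (α - 1) * u ^ β
      = s ^ (α + β) * ∫ r in a..b, (1 - r) ^ (α - 1) * r ^ β := by
  rw [← smul_integral_comp_mul_left, smul_eq_mul]
  have hscale : EqOn (fun r => (s - s * r) ^ (α - 1) * (s * r) ^ β)
      (fun r => s ^ (α - 1 + β) * ((1 - r) ^ (α - 1) * r ^ β)) (uIcc a b) := by
    intro r hr
    rw [uIcc_of_le hab] at hr
    dsimp only
    rw [← mul_one_sub, Real.mul_rpow hs.le (by linarith [hr.2]),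
      Real.mul_rpow hs.le (by linarith [hr.1]), Real.rpow_add hs]
    ring
  rw [integral_congr hscale, intervalIntegral.integral_const_mul, ← mul_assoc, mul_comm s,
    ← Real.rpow_add_one hs.ne']
  congr 2
  ring

theorem integral_one_sub_rpow_mul_rpow_le {α β t : ℝ} (hα0 : 0 < α) (hα1 : α ≤ 1)
    (hβ : 0 ≤ β) (ht0 : 0 ≤ t) (ht1 : t < 1) :
    ∫ r in (0 : ℝ)..t, (1 - r) ^ (α - 1) * r ^ β
      ≤ t ^ (β + 1) * ∫ r in (0 : ℝ)..1, (1 - r) ^ (α - 1) * r ^ β := by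
  have hscale := smul_integral_comp_mul_left (a := 0) (b := 1)
    (fun r => (1 - r) ^ (α - 1) * r ^ β) t
  simp only [mul_zero, mul_one, smul_eq_mul] at hscale
  have hpull : EqOn (fun u => (1 - t * u) ^ (α - 1) * (t * u) ^ β)
      (fun u => t ^ β * ((1 - t * u) ^ (α - 1) * u ^ β)) (uIcc 0 1) := by
    intro u hu
    rw [uIcc_of_le zero_le_one] at hu
    dsimp only
    rw [Real.mul_rpow ht0 hu.1]
    ring
  have hmono : ∫ u in (0 : ℝ)..1, (1 - t * u) ^ (α - 1) * u ^ β
      ≤ ∫ u in (0 : ℝ)..1, (1 - u) ^ (α - 1) * u ^ β := by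
    refine integral_mono_on_of_le_Ioo zero_le_one ?_
      (intervalIntegrable_sub_rpow_mul hα0 (Real.continuous_rpow_const hβ)) fun u hu => ?_
    · refine ContinuousOn.intervalIntegrable fun u hu => ?_
      rw [uIcc_of_le zero_le_one] at hu
      refine (ContinuousAt.mul ?_
        (Real.continuous_rpow_const hβ).continuousAt).continuousWithinAt
      have hpos : 0 < 1 - t * u := by nlinarith [hu.2]
      exact ContinuousAt.rpow_const (f := fun u => 1 - t * u) (by fun_prop) (Or.inl hpos.ne')
    · exact mul_le_mul_of_nonneg_right
        (Real.rpow_le_rpow_of_nonpos (by linarith [hu.2]) (by nlinarith [hu.1]) (by linarith))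
        (Real.rpow_nonneg hu.1.le β)
  rw [← hscale, integral_congr hpull, intervalIntegral.integral_const_mul,
    Real.rpow_add_one' ht0 (by linarith), mul_comm (t ^ β) t, mul_assoc]
  gcongr

noncomputable def riemannLiouville (α : ℝ) (f : ℝ → ℝ) (x : ℝ) : ℝ :=
  (Real.Gamma α)⁻¹ * ∫ u in (0 : ℝ)..x, (x - u) ^ (α - 1) * f u

section RiemannLiouville

variable {α x : ℝ}

theorem riemannLiouville_mono {f g : ℝ → ℝ} (hα : 0 < α) (hx : 0 ≤ x) (hf : Continuous f)
    (hg : Continuous g) (hfg : ∀ u ∈ Ioo 0 x, f u ≤ g u) :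
    riemannLiouville α f x ≤ riemannLiouville α g x := by
  refine mul_le_mul_of_nonneg_left ?_ (inv_nonneg.2 (Real.Gamma_pos_of_pos hα).le)
  refine integral_mono_on_of_le_Ioo hx (intervalIntegrable_sub_rpow_mul hα hf)
    (intervalIntegrable_sub_rpow_mul hα hg) fun u hu => ?_
  exact mul_le_mul_of_nonneg_left (hfg u hu) (Real.rpow_nonneg (by linarith [hu.2]) _)

theorem riemannLiouville_finsetSum {ι : Type*} {s : Finset ι} {F : ι → ℝ → ℝ} (hα : 0 < α)
    (hF : ∀ j ∈ s, Continuous (F j)) :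
    riemannLiouville α (fun u => ∑ j ∈ s, F j u) x = ∑ j ∈ s, riemannLiouville α (F j) x := by
  simp only [riemannLiouville, Finset.mul_sum]
  rw [integral_finsetSum fun j hj => intervalIntegrable_sub_rpow_mul hα (hF j hj),
    Finset.mul_sum]

theorem riemannLiouville_const_mul (c : ℝ) (f : ℝ → ℝ) :
    riemannLiouville α (fun u => c * f u) x = c * riemannLiouville α f x := by
  simp only [riemannLiouville, mul_left_comm _ c, intervalIntegral.integral_const_mul]

theorem riemannLiouville_mul_const (c : ℝ) (f : ℝ → ℝ) :
    riemannLiouville α (fun u => f u * c) x = riemannLiouville α f x * c := by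
  simp only [mul_comm _ c, riemannLiouville_const_mul]

theorem riemannLiouville_rpow {c : ℝ} (hα : 0 < α) (hc : 0 ≤ c) (hx : 0 < x) :
    riemannLiouville α (fun u => u ^ c) x
      = Real.Gamma (c + 1) / Real.Gamma (c + α + 1) * x ^ (c + α) := by
  have hscale :=
    integral_sub_rpow_mul_rpow_mul_left (α := α) (β := c) hx le_rfl zero_le_one le_rfl
  rw [mul_zero, mul_one] at hscale
  have hbeta := integral_one_sub_rpow_mul_rpow (a := c + 1) (by linarith) hα
  rw [add_sub_cancel_right] at hbeta
  have hΓ := Real.Gamma_pos_of_pos hα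
  rw [riemannLiouville, hscale, hbeta, beta, add_right_comm, add_comm α c]
  field_simp

end RiemannLiouville

theorem add_rpow_lt_rpow_add_riemannLiouville {α β x y : ℝ} (hα0 : 0 < α) (hα1 : α < 1)
    (hβ : 0 ≤ β) (hx : 0 < x) (hy : 0 < y) :
    (x + y) ^ (β + α) < y ^ (β + α) +
      Real.Gamma (β + α + 1) / Real.Gamma (β + 1) *
        riemannLiouville α (fun u => (u + y) ^ β) x := by
  set s := x + y with hs_def
  have hs : 0 < s := by positivity
  set t := y / s
  have ht0 : 0 < t := by positivity
  have ht1 : t < 1 := (div_lt_one hs).2 (by linarith)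
  have hst : s * t = y := mul_div_cancel₀ y hs.ne'
  have hshift : ∫ u in (0 : ℝ)..x, (x - u) ^ (α - 1) * (u + y) ^ β
      = ∫ w in y..s, (s - w) ^ (α - 1) * w ^ β := by
    rw [← zero_add y, ← integral_comp_add_right, zero_add]
    simp only [hs_def, add_sub_add_right_eq_sub]
  have hscale := integral_sub_rpow_mul_rpow_mul_left (α := α) (β := β) hs ht0.le ht1.le le_rfl
  rw [hst, mul_one] at hscale
  have hbeta := integral_one_sub_rpow_mul_rpow (a := β + 1) (by linarith) hα0
  rw [add_sub_cancel_right] at hbeta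
  have hintegrable :
      ∀ a b : ℝ, IntervalIntegrable (fun r => (1 - r) ^ (α - 1) * r ^ β) volume a b :=
    fun _ _ => intervalIntegrable_sub_rpow_mul hα0 (Real.continuous_rpow_const hβ)
  have hsplit : ∫ r in t..1, (1 - r) ^ (α - 1) * r ^ β
      = beta (β + 1) α - ∫ r in (0 : ℝ)..t, (1 - r) ^ (α - 1) * r ^ β := by
    rw [← integral_interval_sub_left (hintegrable 0 1) (hintegrable 0 t), hbeta]
  have hpartial := integral_one_sub_rpow_mul_rpow_le hα0 hα1.le hβ ht0.le ht1
  rw [hbeta] at hpartial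
  set I := ∫ r in (0 : ℝ)..t, (1 - r) ^ (α - 1) * r ^ β
  have hΓα := Real.Gamma_pos_of_pos hα0
  have hΓβ := Real.Gamma_pos_of_pos (show 0 < β + 1 by linarith)
  have hΓβα := Real.Gamma_pos_of_pos (show 0 < β + α + 1 by linarith)
  set D := Real.Gamma (β + α + 1) / Real.Gamma (β + 1) * (Real.Gamma α)⁻¹
  have hD : D * beta (β + 1) α = 1 := by
    simp only [D, beta, add_right_comm β 1 α]
    field_simp
  have hDI : D * I < t ^ (β + α) := calc
    D * I ≤ D * (t ^ (β + 1) * beta (β + 1) α) :=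
      mul_le_mul_of_nonneg_left hpartial (by positivity)
    _ = t ^ (β + 1) := by rw [mul_left_comm, hD, mul_one]
    _ < t ^ (β + α) := Real.rpow_lt_rpow_of_exponent_gt ht0 ht1 (by linarith)
  have hy_eq : y ^ (β + α) = s ^ (β + α) * t ^ (β + α) := by
    rw [← Real.mul_rpow hs.le ht0.le, hst]
  have hgap : 0 < s ^ (β + α) * (t ^ (β + α) - D * I) := by
    have := Real.rpow_pos_of_pos hs (β + α)
    have := sub_pos.2 hDI
    positivity
  rw [riemannLiouville, hshift, hscale, hsplit, hy_eq, add_comm α β]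
  linear_combination hgap - s ^ (β + α) * hD

theorem genBinom_zero_right {a : ℝ} (ha : 0 ≤ a) : genBinom a 0 = 1 := by
  have := Real.Gamma_pos_of_pos (show 0 < a + 1 by linarith)
  simp [genBinom, Real.Gamma_one, this.ne']

theorem genBinom_add_add {u v α : ℝ} (hu : 0 ≤ u) (hv : 0 ≤ v) (hα : 0 ≤ α) :
    genBinom (u + α) (v + α) = Real.Gamma (u + α + 1) / Real.Gamma (u + 1) * genBinom u v *
      (Real.Gamma (v + 1) / Real.Gamma (v + α + 1)) := by
  have := Real.Gamma_pos_of_pos (show 0 < u + 1 by linarith)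
  have := Real.Gamma_pos_of_pos (show 0 < v + 1 by linarith)
  have := Real.Gamma_pos_of_pos (show 0 < v + α + 1 by linarith)
  rw [genBinom, genBinom, add_sub_add_right_eq_sub]
  field_simp

noncomputable def neoclassicalSum (α : ℝ) (n : ℕ) (x y : ℝ) : ℝ :=
  ∑ j ∈ Finset.range (n + 1), genBinom (α * n) (α * j) * x ^ (α * j) * y ^ (α * (n - j : ℕ))

section Neoclassical

variable {α : ℝ}

theorem continuous_neoclassicalSum (hα : 0 ≤ α) (n : ℕ) (y : ℝ) :
    Continuous fun u => neoclassicalSum α n u y := by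
  unfold neoclassicalSum
  fun_prop (disch := positivity)

theorem neoclassicalSum_succ (hα : 0 < α) (n : ℕ) {x : ℝ} (hx : 0 < x) (y : ℝ) :
    neoclassicalSum α (n + 1) x y = y ^ (α * (n + 1 : ℕ)) +
      Real.Gamma (α * (n + 1 : ℕ) + 1) / Real.Gamma (α * n + 1) *
        riemannLiouville α (fun u => neoclassicalSum α n u y) x := by
  rw [neoclassicalSum, Finset.sum_range_succ', add_comm]
  congr 1
  · rw [Nat.cast_zero, mul_zero, genBinom_zero_right (by positivity), Real.rpow_zero,
      Nat.sub_zero, mul_one, one_mul]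
  simp only [neoclassicalSum]
  rw [riemannLiouville_finsetSum hα fun j _ => by fun_prop (disch := positivity),
    Finset.mul_sum]
  refine Finset.sum_congr rfl fun j _ => ?_
  rw [riemannLiouville_mul_const, riemannLiouville_const_mul,
    riemannLiouville_rpow hα (by positivity) hx, Nat.add_sub_add_right]
  push_cast
  rw [show α * (n + 1) = α * n + α by ring, show α * (j + 1) = α * j + α by ring,
    genBinom_add_add (by positivity) (by positivity) (by positivity)]
  ring

theorem add_rpow_lt_neoclassicalSum_succ (hα0 : 0 < α) (hα1 : α < 1) {n : ℕ} {y : ℝ}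
    (hy : 0 < y) (ih : ∀ u > 0, (u + y) ^ (α * n) ≤ neoclassicalSum α n u y) {x : ℝ}
    (hx : 0 < x) : (x + y) ^ (α * (n + 1 : ℕ)) < neoclassicalSum α (n + 1) x y := by
  have hstep := add_rpow_lt_rpow_add_riemannLiouville hα0 hα1 (β := α * n) (by positivity) hx hy
  rw [show α * n + α = α * (n + 1 : ℕ) by push_cast; ring] at hstep
  rw [neoclassicalSum_succ hα0 n hx]
  refine hstep.trans_le (add_le_add_right (mul_le_mul_of_nonneg_left ?_ ?_) _)
  · exact riemannLiouville_mono hα0 hx.le (by fun_prop (disch := positivity))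
      (continuous_neoclassicalSum hα0.le n y) fun u hu => ih u hu.1
  · have := Real.Gamma_pos_of_pos (show 0 < α * (n + 1 : ℕ) + 1 by positivity)
    have := Real.Gamma_pos_of_pos (show 0 < α * n + 1 by positivity)
    positivity

theorem add_rpow_le_neoclassicalSum (hα0 : 0 < α) (hα1 : α < 1) {y : ℝ} (hy : 0 < y) (n : ℕ)
    {x : ℝ} (hx : 0 < x) : (x + y) ^ (α * n) ≤ neoclassicalSum α n x y := by
  induction n generalizing x with
  | zero => simp [neoclassicalSum, genBinom_zero_right]
  | succ n ih => exact (add_rpow_lt_neoclassicalSum_succ hα0 hα1 hy (fun u hu => ih hu) hx).le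

end Neoclassical

theorem converse_neoclassical (k : ℕ) (hk : 1 ≤ k) (α : ℝ) (hα0 : 0 < α) (hα1 : α < 1)
    (x y : ℝ) (hx : 0 < x) (hy : 0 < y) :
    (x + y) ^ (α * k) <
      ∑ j ∈ Finset.range (k + 1),
        genBinom (α * k) (α * j) * x ^ (α * j) * y ^ (α * (k - j : ℕ)) := by
  obtain ⟨n, rfl⟩ := Nat.exists_eq_add_of_le' hk
  exact add_rpow_lt_neoclassicalSum_succ hα0 hα1 hy
    (fun u hu => add_rpow_le_neoclassicalSum hα0 hα1 hy n hu) hx
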